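/- Let d : ℕ → ℕ be a function satisfying 2 ≤ d(K) ≤ log₂(K) - log₂(1 + (log K)²) for all sufficiently large K. For each K, let f be a uniformly random polynomial from P_{d(K),K}. Then P(f is irreducible over ℤ) → 1 as K → ∞. -/

import Mathlib

/-!
A reducible `f ∈ PdK d K` factors as `f = g * h` with `g`, `h` monic of positive degree. Landau's
inequality bounds the Mahler measure `M(f) = M(g) M(h)` by `√(d + 1) K`, so one of the two factors,
say `q` of degree `k`, satisfies `2 ^ k M(q) ≤ R := √(2 ^ d √(d + 1) K)`, and then every coefficient
of `q` is at most `R` in absolute value (Mignotte). Such an `f` is determined by the `k` low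
coefficients of `q` and its own coefficients of degrees `k, …, d - 1` (these determine the
cofactor), so there are at most `(2R + 1) ^ k (2K + 1) ^ (d - k)` of them. Summing over `k` bounds
the number of reducible polynomials by `2 (2R + 1) (2K + 1) ^ (d - 1)`, against at least
`K (2K + 1) ^ (d - 1)` polynomials in `PdK d K`; the hypothesis on `d` is what makes `R / K → 0`.
-/

open Polynomial Filter

/-- `PdK d K` is the set of monic integer polynomials of degree `d` with all
coefficients bounded by `K` in absolute value and nonzero constant term. -/
def PdK (d K : ℕ) : Set (Polynomial ℤ) :=
  {f | f.Monic ∧ f.natDegree = d ∧ f.coeff 0 ≠ 0 ∧ ∀ i < d, |f.coeff i| ≤ (K : ℤ)}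

/-- A polynomial with integer coefficients is irreducible over `ℤ` if it cannot be
written as a product of two integer polynomials each of degree strictly smaller
than its own degree. -/
def IrreducibleOverZ (f : Polynomial ℤ) : Prop :=
  ¬ ∃ g h : Polynomial ℤ,
      g.natDegree < f.natDegree ∧ h.natDegree < f.natDegree ∧ f = g * h

open Finset in
theorem sum_Ico_pow_mul_pow_le {x y : ℝ} (hx : 0 ≤ x) (hxy : 2 * x ≤ y) (d : ℕ) :
    ∑ k ∈ Ico 1 d, x ^ k * y ^ (d - k) ≤ 2 * x * y ^ (d - 1) := by
  have hy : 0 ≤ y := by linarith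
  rw [sum_Ico_eq_sum_range]
  calc ∑ j ∈ range (d - 1), x ^ (1 + j) * y ^ (d - (1 + j))
      ≤ ∑ j ∈ range (d - 1), x * y ^ (d - 1) * (1 / 2) ^ j := by
        refine sum_le_sum fun j hj ↦ ?_
        have hj : j ≤ d - 1 := (mem_range.mp hj).le
        calc x ^ (1 + j) * y ^ (d - (1 + j)) = x * x ^ j * y ^ (d - 1 - j) := by
              rw [pow_add, pow_one, Nat.sub_add_eq]
          _ ≤ x * (y / 2) ^ j * y ^ (d - 1 - j) := by
              have : x ^ j ≤ (y / 2) ^ j := pow_le_pow_left₀ hx (by linarith) j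
              gcongr
          _ = x * y ^ (d - 1) * (1 / 2) ^ j := by
              rw [← pow_mul_pow_sub y hj]
              ring
    _ = x * y ^ (d - 1) * ∑ j ∈ range (d - 1), (1 / 2 : ℝ) ^ j := by rw [mul_sum]
    _ ≤ x * y ^ (d - 1) * 2 := by
        gcongr
        exact sum_geometric_two_le _
    _ = 2 * x * y ^ (d - 1) := by ring

namespace Polynomial

theorem IsMonicOfDegree.eq_of_coeff_mul_eq {R : Type*} [Ring R] {q r₁ r₂ : R[X]} {k m : ℕ}
    (hq : q.IsMonicOfDegree k) (h₁ : r₁.IsMonicOfDegree m) (h₂ : r₂.IsMonicOfDegree m)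
    (h : ∀ j < m, (q * r₁).coeff (k + j) = (q * r₂).coeff (k + j)) : r₁ = r₂ := by
  by_contra hne
  have hm : m ≠ 0 := by
    rintro rfl
    exact hne ((isMonicOfDegree_zero_iff.mp h₁).trans (isMonicOfDegree_zero_iff.mp h₂).symm)
  have hlead := coeff_mul_degree_add_degree q (r₁ - r₂)
  rw [hq.natDegree_eq, hq.leadingCoeff_eq, one_mul, mul_sub, coeff_sub,
    h _ (h₁.natDegree_sub_lt hm h₂), sub_self] at hlead
  exact sub_ne_zero.mpr hne (leadingCoeff_eq_zero.mp hlead.symm)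

theorem IsMonicOfDegree.eq_of_coeff_eq {R : Type*} [Ring R] {r₁ r₂ : R[X]} {m : ℕ}
    (h₁ : r₁.IsMonicOfDegree m) (h₂ : r₂.IsMonicOfDegree m)
    (h : ∀ j < m, r₁.coeff j = r₂.coeff j) : r₁ = r₂ :=
  (isMonicOfDegree_zero_iff.mpr rfl).eq_of_coeff_mul_eq h₁ h₂ (by simpa using h)

theorem abs_coeff_le_two_pow_mul_mahlerMeasure (p : ℤ[X]) (i : ℕ) :
    (|p.coeff i| : ℝ) ≤ 2 ^ p.natDegree * (p.map (Int.castRingHom ℂ)).mahlerMeasure := by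
  have h := (p.map (Int.castRingHom ℂ)).norm_coeff_le_choose_mul_mahlerMeasure i
  rw [natDegree_map_eq_of_injective (RingHom.injective_int _), coeff_map, eq_intCast,
    Complex.norm_intCast] at h
  refine h.trans (mul_le_mul_of_nonneg_right ?_ (mahlerMeasure_nonneg _))
  exact_mod_cast Nat.choose_le_two_pow _ _

end Polynomial

theorem isMonicOfDegree_of_mem_PdK {d K : ℕ} {f : ℤ[X]} (hf : f ∈ PdK d K) : f.IsMonicOfDegree d :=
  ⟨hf.2.1, hf.1⟩

theorem abs_coeff_le_of_mem_PdK {d K : ℕ} {f : ℤ[X]} (hf : f ∈ PdK d K) (hK : 1 ≤ K) (i : ℕ) :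
    |f.coeff i| ≤ K := by
  obtain ⟨hm, rfl, -, hcoeff⟩ := hf
  rcases lt_trichotomy i f.natDegree with hi | rfl | hi
  · exact hcoeff i hi
  · simpa [hm.coeff_natDegree] using hK
  · simp [coeff_eq_zero_of_natDegree_lt hi]

theorem mahlerMeasure_le_of_mem_PdK {d K : ℕ} {f : ℤ[X]} (hf : f ∈ PdK d K) (hK : 1 ≤ K) :
    (f.map (Int.castRingHom ℂ)).mahlerMeasure ≤ √(d + 1) * K := by
  refine (mahlerMeasure_le_sqrt_natDegree_add_one_mul_supNorm _).trans ?_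
  obtain ⟨i, hi⟩ := (f.map (Int.castRingHom ℂ)).exists_eq_supNorm
  rw [hi, hf.1.natDegree_map, hf.2.1, coeff_map, eq_intCast, Complex.norm_intCast]
  gcongr
  exact_mod_cast abs_coeff_le_of_mem_PdK hf hK i

theorem finite_PdK (d : ℕ) {K : ℕ} (hK : 1 ≤ K) : (PdK d K).Finite :=
  (finite_mahlerMeasure_le d ⟨√(d + 1) * K, by positivity⟩).subset
    fun _ hf ↦ ⟨hf.2.1.le, mahlerMeasure_le_of_mem_PdK hf hK⟩

open Finset in
theorem le_ncard_PdK {d K : ℕ} (hd : 1 ≤ d) (hK : 1 ≤ K) :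
    K * (2 * K + 1) ^ (d - 1) ≤ (PdK d K).ncard := by
  classical
  let box : Fin d → Finset ℤ := fun i ↦ if (i : ℕ) = 0 then Icc 1 (K : ℤ) else Icc (-K : ℤ) K
  have hcoeff (v : Fin d → ℤ) (i : Fin d) : (X ^ d + ofFn d v).coeff i = v i := by
    rw [coeff_add, coeff_X_pow, if_neg i.isLt.ne, zero_add, ofFn_coeff_eq_val_of_lt _ i.isLt]
  calc K * (2 * K + 1) ^ (d - 1) = #(Fintype.piFinset box) := by
        obtain ⟨n, rfl⟩ := Nat.exists_eq_add_of_le' hd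
        simp only [box, Fintype.card_piFinset, Fin.prod_univ_succ, Fin.val_zero, Fin.val_succ,
          Nat.succ_ne_zero, ite_true, ite_false, Int.card_Icc, prod_const, card_univ,
          Fintype.card_fin]
        congr 2 <;> omega
    _ ≤ (PdK d K).ncard := by
      rw [← Set.ncard_coe_finset]
      refine Set.ncard_le_ncard_of_injOn (fun v ↦ X ^ d + ofFn d v) (fun v hv ↦ ?_) ?_
        (finite_PdK d hK)
      · have hv i := Fintype.mem_piFinset.mp hv i
        have hmon := (isMonicOfDegree_X_pow (R := ℤ) d).add_right (ofFn_natDegree_lt hd v)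
        refine ⟨hmon.monic, hmon.natDegree_eq, ?_, fun i hi ↦ ?_⟩
        · have := hv ⟨0, hd⟩
          simp only [box, if_pos rfl, mem_Icc] at this
          rw [hcoeff v ⟨0, hd⟩]
          omega
        · have := hv ⟨i, hi⟩
          rw [hcoeff v ⟨i, hi⟩, abs_le]
          simp only [box] at this
          split_ifs at this <;> simp only [mem_Icc] at this <;> omega
      · intro v _ w _ h
        exact injective_ofFn d (add_left_cancel h)

def smallFactorSet (d K k c : ℕ) : Set ℤ[X] :=
  {f ∈ PdK d K | ∃ q : ℤ[X], q.IsMonicOfDegree k ∧ q ∣ f ∧ ∀ i < k, |q.coeff i| ≤ c}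

open Finset in
theorem ncard_smallFactorSet_le {d K k : ℕ} (c : ℕ) (hk : k ≤ d) :
    (smallFactorSet d K k c).ncard ≤ (2 * c + 1) ^ k * (2 * K + 1) ^ (d - k) := by
  classical
  have hfactor : ∀ f ∈ smallFactorSet d K k c, ∃ q r : ℤ[X], q.IsMonicOfDegree k ∧
      r.IsMonicOfDegree (d - k) ∧ f = q * r ∧ ∀ i < k, |q.coeff i| ≤ c := by
    rintro f ⟨hf, q, hq, ⟨r, rfl⟩, hc⟩
    refine ⟨q, r, hq, hq.of_mul_left ?_, rfl, hc⟩
    rw [Nat.add_sub_cancel' hk]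
    exact isMonicOfDegree_of_mem_PdK hf
  choose! q r hq hr hqr hc using hfactor
  let box := Fintype.piFinset (fun _ : Fin k ↦ Icc (-c : ℤ) c) ×ˢ
    Fintype.piFinset (fun _ : Fin (d - k) ↦ Icc (-K : ℤ) K)
  calc (smallFactorSet d K k c).ncard ≤ (box : Set _).ncard := by
        refine Set.ncard_le_ncard_of_injOn (t := box)
          (fun f ↦ (fun i : Fin k ↦ (q f).coeff i, fun j : Fin (d - k) ↦ f.coeff (k + j)))
          (fun f hf ↦ ?_) (fun f₁ hf₁ f₂ hf₂ h ↦ ?_)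
        · simp only [box, coe_product, Set.mem_prod, Fintype.coe_piFinset, Set.mem_pi,
            Set.mem_univ, mem_coe, mem_Icc, forall_const, ← abs_le]
          refine ⟨fun i ↦ hc f hf i i.isLt, fun j ↦ hf.1.2.2.2 _ (by omega)⟩
        · simp only [Prod.mk.injEq, funext_iff, Fin.forall_iff] at h
          have hq' : q f₁ = q f₂ := (hq f₁ hf₁).eq_of_coeff_eq (hq f₂ hf₂) h.1
          have hr' : r f₁ = r f₂ := (hq f₁ hf₁).eq_of_coeff_mul_eq (hr f₁ hf₁) (hr f₂ hf₂)
            (by rw [← hqr f₁ hf₁, hq', ← hqr f₂ hf₂]; exact h.2)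
          rw [hqr f₁ hf₁, hqr f₂ hf₂, hq', hr']
    _ = (2 * c + 1) ^ k * (2 * K + 1) ^ (d - k) := by
        rw [Set.ncard_coe_finset]
        simp only [box, card_product, Fintype.card_piFinset, Int.card_Icc, prod_const, card_univ,
          Fintype.card_fin]
        congr 2 <;> omega

theorem exists_monic_factors_of_not_irreducibleOverZ {f : ℤ[X]} (hf : f.Monic)
    (hred : ¬ IrreducibleOverZ f) :
    ∃ g h : ℤ[X], g.Monic ∧ h.Monic ∧ 0 < g.natDegree ∧ 0 < h.natDegree ∧ f = g * h := by
  obtain ⟨g, h, hg, hh, rfl⟩ := not_not.mp hred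
  rw [natDegree_mul (left_ne_zero_of_mul hf.ne_zero) (right_ne_zero_of_mul hf.ne_zero)] at hg hh
  have hlc : g.leadingCoeff * h.leadingCoeff = 1 := by rw [← leadingCoeff_mul]; exact hf
  rcases Int.isUnit_iff.mp (IsUnit.of_mul_eq_one _ hlc) with hu | hu
  · rw [hu, one_mul] at hlc
    exact ⟨g, h, hu, hlc, by omega, by omega, rfl⟩
  · rw [hu, neg_one_mul, neg_eq_iff_eq_neg] at hlc
    exact ⟨-g, -h, by simp [Monic, hu], by simp [Monic, hlc], by rw [natDegree_neg]; omega,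
      by rw [natDegree_neg]; omega, (neg_mul_neg g h).symm⟩

noncomputable def factorCoeffBound (d K : ℕ) : ℝ := √(2 ^ d * (√(d + 1) * K))

theorem factorCoeffBound_nonneg (d K : ℕ) : 0 ≤ factorCoeffBound d K := Real.sqrt_nonneg _

theorem mem_smallFactorSet_of_two_pow_mul_mahlerMeasure_le {d K : ℕ} {R : ℝ} {f q : ℤ[X]}
    (hR : 0 ≤ R) (hf : f ∈ PdK d K) (hq : q.Monic) (hqf : q ∣ f)
    (hM : 2 ^ q.natDegree * (q.map (Int.castRingHom ℂ)).mahlerMeasure ≤ R) :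
    f ∈ smallFactorSet d K q.natDegree ⌊R⌋₊ := by
  refine ⟨hf, q, ⟨rfl, hq⟩, hqf, fun i _ ↦ ?_⟩
  rw [Int.natCast_floor_eq_floor hR, Int.le_floor]
  exact_mod_cast (abs_coeff_le_two_pow_mul_mahlerMeasure q i).trans hM

theorem exists_mem_smallFactorSet {d K : ℕ} {f : ℤ[X]} (hK : 1 ≤ K) (hf : f ∈ PdK d K)
    (hred : ¬ IrreducibleOverZ f) :
    ∃ k ∈ Finset.Ico 1 d, f ∈ smallFactorSet d K k ⌊factorCoeffBound d K⌋₊ := by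
  obtain ⟨g, h, hg, hh, hg0, hh0, rfl⟩ := exists_monic_factors_of_not_irreducibleOverZ hf.1 hred
  have hdeg : g.natDegree + h.natDegree = d := (hg.natDegree_mul hh).symm.trans hf.2.1
  set R := factorCoeffBound d K
  have hR : 0 ≤ R := factorCoeffBound_nonneg d K
  have hRR : R * R = 2 ^ d * (√(d + 1) * K) := Real.mul_self_sqrt (by positivity)
  let M : ℤ[X] → ℝ := fun p ↦ (p.map (Int.castRingHom ℂ)).mahlerMeasure
  have hM : (2 ^ g.natDegree * M g) * (2 ^ h.natDegree * M h) ≤ R * R := by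
    rw [hRR, mul_mul_mul_comm, ← pow_add, hdeg]
    refine mul_le_mul_of_nonneg_left ?_ (by positivity)
    rw [← mahlerMeasure_mul, ← Polynomial.map_mul]
    exact mahlerMeasure_le_of_mem_PdK hf hK
  by_cases hgR : 2 ^ g.natDegree * M g ≤ R
  · exact ⟨g.natDegree, Finset.mem_Ico.mpr ⟨hg0, by omega⟩,
      mem_smallFactorSet_of_two_pow_mul_mahlerMeasure_le hR hf hg (dvd_mul_right g h) hgR⟩
  · refine ⟨h.natDegree, Finset.mem_Ico.mpr ⟨hh0, by omega⟩,
      mem_smallFactorSet_of_two_pow_mul_mahlerMeasure_le hR hf hh (dvd_mul_left h g) ?_⟩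
    by_contra hhR
    exact (mul_lt_mul'' (not_le.mp hgR) (not_le.mp hhR) hR hR).not_ge hM

theorem ncard_PdK_diff_irreducibleOverZ_le {d K : ℕ} (hK : 1 ≤ K)
    (hR : 4 * factorCoeffBound d K + 2 ≤ 2 * K + 1) :
    ((PdK d K \ {f | IrreducibleOverZ f}).ncard : ℝ) ≤
      2 * (2 * factorCoeffBound d K + 1) * (2 * K + 1) ^ (d - 1) := by
  set c := ⌊factorCoeffBound d K⌋₊
  have hc : (c : ℝ) ≤ factorCoeffBound d K := Nat.floor_le (factorCoeffBound_nonneg d K)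
  have hsub : PdK d K \ {f | IrreducibleOverZ f} ⊆ ⋃ k ∈ Finset.Ico 1 d, smallFactorSet d K k c :=
    fun f ⟨hf, hred⟩ ↦ by
      obtain ⟨k, hk, hmem⟩ := exists_mem_smallFactorSet hK hf hred
      exact Set.mem_biUnion hk hmem
  have hfin : (⋃ k ∈ Finset.Ico 1 d, smallFactorSet d K k c).Finite :=
    (finite_PdK d hK).subset (Set.iUnion₂_subset fun _ _ ↦ Set.sep_subset _ _)
  calc ((PdK d K \ {f | IrreducibleOverZ f}).ncard : ℝ)
      ≤ ∑ k ∈ Finset.Ico 1 d, ((smallFactorSet d K k c).ncard : ℝ) := by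
        exact_mod_cast (Set.ncard_le_ncard hsub hfin).trans (Finset.set_ncard_biUnion_le _ _)
    _ ≤ ∑ k ∈ Finset.Ico 1 d, (2 * c + 1 : ℝ) ^ k * (2 * K + 1) ^ (d - k) := by
        refine Finset.sum_le_sum fun k hk ↦ ?_
        exact_mod_cast ncard_smallFactorSet_le c (Finset.mem_Ico.mp hk).2.le
    _ ≤ 2 * (2 * c + 1) * (2 * K + 1) ^ (d - 1) :=
        sum_Ico_pow_mul_pow_le (by positivity) (by linarith) d
    _ ≤ 2 * (2 * factorCoeffBound d K + 1) * (2 * K + 1) ^ (d - 1) := by gcongr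

theorem one_sub_le_ncard_PdK_inter_irreducibleOverZ_div {d K : ℕ} (hd : 1 ≤ d) (hK : 1 ≤ K)
    (hε : 2 * (2 * factorCoeffBound d K + 1) / K ≤ 1) :
    1 - 2 * (2 * factorCoeffBound d K + 1) / K ≤
      ((PdK d K ∩ {f | IrreducibleOverZ f}).ncard : ℝ) / (PdK d K).ncard := by
  have hKpos : (0 : ℝ) < K := by exact_mod_cast hK
  have hP : (K * (2 * K + 1) ^ (d - 1) : ℝ) ≤ (PdK d K).ncard := by
    exact_mod_cast le_ncard_PdK hd hK
  have hPpos : (0 : ℝ) < (PdK d K).ncard := lt_of_lt_of_le (by positivity) hP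
  have hsplit : ((PdK d K ∩ {f | IrreducibleOverZ f}).ncard : ℝ) +
      (PdK d K \ {f | IrreducibleOverZ f}).ncard = (PdK d K).ncard := by
    exact_mod_cast Set.ncard_inter_add_ncard_sdiff_eq_ncard _ _ (finite_PdK d hK)
  have hred := ncard_PdK_diff_irreducibleOverZ_le hK (by rw [div_le_one hKpos] at hε; linarith)
  have hεP : 2 * (2 * factorCoeffBound d K + 1) * (2 * K + 1) ^ (d - 1) ≤
      2 * (2 * factorCoeffBound d K + 1) / K * (PdK d K).ncard := calc
    _ = 2 * (2 * factorCoeffBound d K + 1) / K * (K * (2 * K + 1) ^ (d - 1)) := by field_simp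
    _ ≤ _ := mul_le_mul_of_nonneg_left hP
      (div_nonneg (by linarith [factorCoeffBound_nonneg d K]) hKpos.le)
  rw [le_div_iff₀ hPpos]
  linarith

section

open Real

theorem factorCoeffBound_div_le_sqrt {d K : ℕ} (hK : 1 ≤ K)
    (hdK : (d : ℝ) ≤ logb 2 K - logb 2 (1 + log K ^ 2)) :
    factorCoeffBound d K / K ≤ √((logb 2 K + 1) / (1 + log K ^ 2)) := by
  have hKpos : (0 : ℝ) < K := by exact_mod_cast hK
  have hlogb : 0 ≤ logb 2 K := logb_nonneg one_lt_two (by exact_mod_cast hK)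
  set L := 1 + log K ^ 2
  have hL : 1 ≤ L := le_add_of_nonneg_right (sq_nonneg _)
  have h2d : (2 : ℝ) ^ d ≤ K / L := by
    rw [← logb_div hKpos.ne' (by positivity), le_logb_iff_rpow_le one_lt_two (by positivity)]
      at hdK
    simpa using hdK
  have hsqrt : √(d + 1) ≤ logb 2 K + 1 := by
    have := logb_nonneg one_lt_two hL
    refine (sqrt_le_left (by linarith)).mpr ?_
    nlinarith
  rw [le_sqrt (div_nonneg (factorCoeffBound_nonneg d K) hKpos.le)
    (div_nonneg (by linarith) (by positivity)), div_pow, factorCoeffBound,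
    sq_sqrt (by positivity : (0 : ℝ) ≤ 2 ^ d * (√(d + 1) * K))]
  calc 2 ^ d * (√(d + 1) * K) / K ^ 2 = 2 ^ d * √(d + 1) / K := by field_simp
    _ ≤ K / L * (logb 2 K + 1) / K :=
        div_le_div_of_nonneg_right (mul_le_mul h2d hsqrt (sqrt_nonneg _) (by positivity)) hKpos.le
    _ = (logb 2 K + 1) / L := by field_simp

theorem tendsto_logb_add_one_div_one_add_log_sq :
    Tendsto (fun K : ℕ ↦ (logb 2 K + 1) / (1 + log K ^ 2)) atTop (nhds 0) := by
  have hlog : Tendsto (fun K : ℕ ↦ log K) atTop atTop :=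
    tendsto_log_atTop.comp tendsto_natCast_atTop_atTop
  refine squeeze_zero' ?_ ?_ (by simpa using hlog.inv_tendsto_atTop.const_mul 3)
  all_goals filter_upwards [hlog.eventually_ge_atTop 1] with K hK
  · have : 0 ≤ logb 2 K := div_nonneg (by linarith) (log_nonneg one_le_two)
    positivity
  · have hlog2 := log_two_gt_d9
    have : logb 2 K ≤ 2 * log K := by
      rw [logb, div_le_iff₀ (by linarith)]
      nlinarith
    rw [← div_eq_mul_inv, div_le_div_iff₀ (by positivity) (by linarith)]
    nlinarith

theorem tendsto_factorCoeffBound_div {d : ℕ → ℕ}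
    (hd : ∀ᶠ K : ℕ in atTop, (d K : ℝ) ≤ logb 2 K - logb 2 (1 + log K ^ 2)) :
    Tendsto (fun K : ℕ ↦ factorCoeffBound (d K) K / K) atTop (nhds 0) := by
  have hsqrt := tendsto_logb_add_one_div_one_add_log_sq.sqrt
  rw [sqrt_zero] at hsqrt
  refine squeeze_zero' (Eventually.of_forall fun K ↦ ?_) ?_ hsqrt
  · exact div_nonneg (factorCoeffBound_nonneg (d K) K) K.cast_nonneg
  filter_upwards [hd, eventually_ge_atTop 1] with K hdK hK
  exact factorCoeffBound_div_le_sqrt hK hdK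

end

theorem stmt_14 (d : ℕ → ℕ)
    (hd : ∀ᶠ K : ℕ in atTop,
      2 ≤ d K ∧ (d K : ℝ) ≤ Real.logb 2 K - Real.logb 2 (1 + (Real.log K) ^ 2)) :
    Tendsto (fun K : ℕ =>
        (Nat.card {f : Polynomial ℤ | f ∈ PdK (d K) K ∧ IrreducibleOverZ f} : ℝ) /
          (Nat.card ↥(PdK (d K) K) : ℝ))
      atTop (nhds 1) := by
  have hε : Tendsto (fun K : ℕ ↦ 2 * (2 * factorCoeffBound (d K) K + 1) / K) atTop (nhds 0) := by
    have := ((tendsto_factorCoeffBound_div (hd.mono fun _ h ↦ h.2)).const_mul 4).add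
      (tendsto_one_div_atTop_nhds_zero_nat.const_mul 2)
    rw [mul_zero, mul_zero, add_zero] at this
    exact this.congr fun K ↦ by ring
  refine tendsto_of_tendsto_of_tendsto_of_le_of_le' (by simpa using hε.const_sub 1)
    tendsto_const_nhds ?_ ?_
  · filter_upwards [hd, hε.eventually (eventually_le_nhds one_pos), eventually_ge_atTop 1]
      with K hdK hεK hK
    rw [Nat.card_coe_set_eq, Nat.card_coe_set_eq]
    exact one_sub_le_ncard_PdK_inter_irreducibleOverZ_div (one_le_two.trans hdK.1) hK hεK
  · filter_upwards [eventually_ge_atTop 1] with K hK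
    exact div_le_one_of_le₀ (by exact_mod_cast Nat.card_mono (finite_PdK _ hK) (Set.sep_subset _ _))
      (Nat.cast_nonneg _)
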